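/- arXiv:2109.01791 — 3 statements merged into one kernel-verified Lean document; each statement's English description precedes it below -/
import Mathlib

section
/- Let $\phi \in L^1(\mathbb{R})$ with $\int_{\mathbb{R}} |x|^\sigma |\phi(x)|\,dx < \infty$ for some $\sigma > 0$. Let $(x_n), (y_n)$ be sequences with $x_n > y_n$, $y_n \to +\infty$, and $x_n/y_n \to 1$. Then $\lim_{n\to\infty} \frac{1}{2x_n} \int_{-y_n}^{x_n} \int_{-y_n+y}^{x_n+y} \phi(x)\,dx\,dy = \int_{\mathbb{R}} \phi(x)\,dx$. -/
open MeasureTheory Filter Set Topology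

/-!
By Fubini, the double integral is `∫ w(t) φ(t) dt`, where `w(t)` is the length of the set of
`s ∈ (-y, x)` with `t ∈ (-y + s, x + s)`: the tent `max (x + y - |t - (x - y)|) 0`. Divided by
`2x`, this weight is eventually bounded by `2` and tends to `1` pointwise because `y / x → 1` and
`x → ∞`, so dominated convergence gives the limit `∫ φ`.
-/

lemma min_sub_max_eq_sub_abs (a b t : ℝ) :
    min b (t - a) - max a (t - b) = b - a - |t - (a + b)| := by
  rcases le_total t (a + b) with h | h
  · rw [min_eq_right (by linarith), max_eq_left (by linarith), abs_of_nonpos (by linarith)]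
    ring
  · rw [min_eq_left (by linarith), max_eq_right (by linarith), abs_of_nonneg (by linarith)]
    ring

lemma volume_real_Ioo_inter_Ioo_sub (a b t : ℝ) :
    volume.real (Ioo a b ∩ Ioo (t - b) (t - a)) = max (b - a - |t - (a + b)|) 0 := by
  rw [Ioo_inter_Ioo, Real.volume_real_Ioo, ← min_sub_max_eq_sub_abs]

lemma mul_max_sub_abs_zero {c : ℝ} (hc : 0 ≤ c) (A B : ℝ) :
    c * max (A - |B|) 0 = max (c * A - |c * B|) 0 := by
  rw [mul_max_of_nonneg _ _ hc, mul_sub, abs_mul, abs_of_nonneg hc, mul_zero]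

/-- `windowWeight (y / x) (t / (2 * x))` is `1 / (2 * x)` times the tent
`max (x + y - |t - (x - y)|) 0`. -/
noncomputable def windowWeight (r u : ℝ) : ℝ := max ((1 + r) / 2 - |u - (1 - r) / 2|) 0

lemma continuous_windowWeight : Continuous (Function.uncurry windowWeight) := by
  unfold windowWeight
  fun_prop

lemma windowWeight_one_zero : windowWeight 1 0 = 1 := by
  norm_num [windowWeight]

lemma abs_windowWeight_le (r u : ℝ) : |windowWeight r u| ≤ max ((1 + r) / 2) 0 := by
  rw [abs_of_nonneg (le_max_right _ _)]
  exact max_le_max_right 0 (sub_le_self _ (abs_nonneg _))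

lemma mul_max_tent_eq_windowWeight {x : ℝ} (hx : 0 < x) (y t : ℝ) :
    1 / (2 * x) * max (x - -y - |t - (-y + x)|) 0 = windowWeight (y / x) (t / (2 * x)) := by
  have hA : 1 / (2 * x) * (x - -y) = (1 + y / x) / 2 := by field_simp; ring
  have hB : 1 / (2 * x) * (t - (-y + x)) = t / (2 * x) - (1 - y / x) / 2 := by field_simp; ring
  rw [mul_max_sub_abs_zero (by positivity), hA, hB, windowWeight]

variable {E : Type*} [NormedAddCommGroup E] [NormedSpace ℝ E]

theorem tendsto_integral_smul_of_tendsto_one {α ι : Type*} [MeasurableSpace α] {μ : Measure α}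
    {l : Filter ι} [l.IsCountablyGenerated] {w : ι → α → ℝ} {φ : α → E} (hφ : Integrable φ μ)
    (hw : ∀ n, AEStronglyMeasurable (w n) μ) {C : ℝ} (hC : ∀ᶠ n in l, ∀ t, |w n t| ≤ C)
    (hlim : ∀ t, Tendsto (w · t) l (𝓝 1)) :
    Tendsto (fun n => ∫ t, w n t • φ t ∂μ) l (𝓝 (∫ t, φ t ∂μ)) := by
  refine tendsto_integral_filter_of_dominated_convergence (fun t => C * ‖φ t‖)
    (Eventually.of_forall fun n => (hw n).smul hφ.1) ?_ (hφ.norm.const_mul C) ?_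
  · filter_upwards [hC] with n hn
    refine Eventually.of_forall fun t => ?_
    rw [norm_smul, Real.norm_eq_abs]
    exact mul_le_mul_of_nonneg_right (hn t) (norm_nonneg _)
  · refine Eventually.of_forall fun t => ?_
    simpa using (hlim t).smul_const (φ t)

variable [CompleteSpace E]

theorem integral_Ioo_integral_Ioo_add {φ : ℝ → E} (hφ : Integrable φ) (a b : ℝ) :
    ∫ s in Ioo a b, ∫ t in Ioo (a + s) (b + s), φ t
      = ∫ t, max (b - a - |t - (a + b)|) 0 • φ t := by
  set S : Set (ℝ × ℝ) := {p | a + p.1 < p.2 ∧ p.2 < b + p.1}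
  have hS : MeasurableSet S :=
    (measurableSet_lt (measurable_const.add measurable_fst) measurable_snd).inter
      (measurableSet_lt measurable_snd (measurable_const.add measurable_fst))
  set F : ℝ → ℝ → E := fun s t => S.indicator (fun p => φ p.2) (s, t)
  have hF : Integrable (Function.uncurry F) ((volume.restrict (Ioo a b)).prod volume) :=
    (hφ.comp_snd _).indicator hS
  have inner_t (s : ℝ) : ∫ t, F s t = ∫ t in Ioo (a + s) (b + s), φ t := by
    rw [← integral_indicator measurableSet_Ioo]
    rfl
  have inner_s (t : ℝ) :
      ∫ s in Ioo a b, F s t = max (b - a - |t - (a + b)|) 0 • φ t := by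
    have hFt : (F · t) = (Ioo (t - b) (t - a)).indicator (fun _ => φ t) := by
      ext s
      simp only [F, S, indicator, mem_ofPred_eq, mem_Ioo]
      grind
    rw [hFt, setIntegral_indicator measurableSet_Ioo, setIntegral_const,
      volume_real_Ioo_inter_Ioo_sub]
  simp_rw [← inner_t, integral_integral_swap hF, inner_s]

theorem one_div_two_mul_smul_integral_Ioc_integral_Ioc_add {φ : ℝ → E} (hφ : Integrable φ)
    {x : ℝ} (hx : 0 < x) (y : ℝ) :
    (1 / (2 * x)) • ∫ s in Ioc (-y) x, ∫ t in Ioc (-y + s) (x + s), φ t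
      = ∫ t, windowWeight (y / x) (t / (2 * x)) • φ t := by
  simp only [integral_Ioc_eq_integral_Ioo, integral_Ioo_integral_Ioo_add hφ, ← integral_smul,
    smul_smul, mul_max_tent_eq_windowWeight hx]

theorem stmt0_general (φ : ℝ → ℝ)
    (hφ : Integrable φ)
    (x y : ℕ → ℝ)
    (hy : Tendsto y atTop atTop)
    (hratio : Tendsto (fun n => x n / y n) atTop (nhds 1)) :
    Tendsto (fun n => (1 / (2 * x n)) *
        ∫ s in Set.Ioc (-(y n)) (x n), (∫ t in Set.Ioc (-(y n) + s) (x n + s), φ t))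
      atTop (nhds (∫ t, φ t)) := by
  have hyx : Tendsto (fun n => y n / x n) atTop (𝓝 1) := by
    simpa using hratio.inv₀ one_ne_zero
  have hx : Tendsto x atTop atTop := by
    refine (hratio.pos_mul_atTop one_pos hy).congr' ?_
    filter_upwards [hy.eventually_gt_atTop 0] with n hn using div_mul_cancel₀ _ hn.ne'
  have hrepr : ∀ᶠ n in atTop, ∫ t, windowWeight (y n / x n) (t / (2 * x n)) • φ t
      = (1 / (2 * x n)) * ∫ s in Ioc (-(y n)) (x n), ∫ t in Ioc (-(y n) + s) (x n + s), φ t := by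
    filter_upwards [hx.eventually_gt_atTop 0] with n hn
    exact (one_div_two_mul_smul_integral_Ioc_integral_Ioc_add hφ hn (y n)).symm
  have hbound : ∀ᶠ n in atTop, ∀ t, |windowWeight (y n / x n) (t / (2 * x n))| ≤ 2 := by
    filter_upwards [hyx.eventually (gt_mem_nhds (by norm_num : (1 : ℝ) < 3))] with n hn t
    exact (abs_windowWeight_le _ _).trans (max_le (by linarith) (by norm_num))
  have hlim (t : ℝ) : Tendsto (fun n => windowWeight (y n / x n) (t / (2 * x n))) atTop (𝓝 1) := by
    have ht : Tendsto (fun n => t / (2 * x n)) atTop (𝓝 0) :=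
      tendsto_const_nhds.div_atTop (hx.const_mul_atTop two_pos)
    rw [← windowWeight_one_zero]
    exact (continuous_windowWeight.tendsto (1, 0)).comp (hyx.prodMk_nhds ht)
  have hmeas (n : ℕ) :
      AEStronglyMeasurable (fun t => windowWeight (y n / x n) (t / (2 * x n))) volume :=
    ((continuous_windowWeight.uncurry_left _).comp (continuous_id.div_const _)).aestronglyMeasurable
  exact (tendsto_integral_smul_of_tendsto_one hφ hmeas hbound hlim).congr' hrepr

/-- Averaged-translation representation lemma: for `φ ∈ L¹(ℝ)` with a finite
`σ`-moment, averages of translates over growing windows converge to `∫ φ`. -/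
theorem stmt0 (φ : ℝ → ℝ) (σ : ℝ) (hσ : 0 < σ)
    (hφ : Integrable φ)
    (hmom : Integrable (fun x => |x| ^ σ * |φ x|))
    (x y : ℕ → ℝ)
    (hxy : ∀ n, y n < x n)
    (hy : Tendsto y atTop atTop)
    (hratio : Tendsto (fun n => x n / y n) atTop (nhds 1)) :
    Tendsto (fun n => (1 / (2 * x n)) *
        ∫ s in Set.Ioc (-(y n)) (x n), (∫ t in Set.Ioc (-(y n) + s) (x n + s), φ t))
      atTop (nhds (∫ t, φ t)) :=
  stmt0_general φ hφ x y hy hratio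
end

section
/- Let $E$ be a normed vector space with dual $E^*$, and let $f, g : E \to \mathbb{R}\cup\{+\infty\}$ be convex. Suppose there exists $x_0 \in E$ with $f(x_0) < \infty$, $g(x_0) < \infty$, and $f$ continuous at $x_0$. Then $\inf_{x \in E} (f(x) + g(x)) = \max_{y \in E^*} (-f^*(-y) - g^*(y))$, where the maximum on the right is attained. -/
/-!
Weak duality is the Fenchel–Young inequality `y x - f x ≤ f* y`. For the converse, let `m` be
the (finite) infimum of `f + g`. The epigraph of `f` has nonempty interior, since `f` is
continuous at `x₀`, and this interior is disjoint from the convex set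
`{(x, t) | g x ≤ m - t}`. A closed hyperplane separating them cannot be vertical, because both
sets meet the line `{x₀} × ℝ`; normalised to the form `(x, t) ↦ -(y x) - t`, it bounds `f*(-y)`
and `g* y` so that `-f*(-y) - g* y ≥ m`.
-/

open Filter

/-- The Legendre–Fenchel conjugate of an `ℝ ∪ {+∞}`-valued function on a normed
space, evaluated at a continuous linear functional. -/
noncomputable def eConj {E : Type*} [NormedAddCommGroup E] [NormedSpace ℝ E]
    (f : E → EReal) (y : E →L[ℝ] ℝ) : EReal :=
  ⨆ x : E, ((y x : ℝ) : EReal) - f x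

open scoped Topology

theorem exists_separating_of_disjoint_interior {F : Type*} [TopologicalSpace F] [AddCommGroup F]
    [Module ℝ F] [IsTopologicalAddGroup F] [ContinuousSMul ℝ F] [LocallyConvexSpace ℝ F]
    {s t : Set F} (hs : Convex ℝ s) (ht : Convex ℝ t) (hst : Disjoint (interior s) t)
    (hsint : (interior s).Nonempty) :
    ∃ (φ : StrongDual ℝ F) (u : ℝ),
      (∀ a ∈ interior s, φ a < u) ∧ (∀ a ∈ s, φ a ≤ u) ∧ ∀ b ∈ t, u ≤ φ b := by
  obtain ⟨φ, u, hlt, hle⟩ := geometric_hahn_banach_open hs.interior isOpen_interior ht hst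
  refine ⟨φ, u, hlt, fun a ha => ?_, hle⟩
  refine closure_minimal (fun p hp => (hlt p hp).le) (isClosed_Iic.preimage φ.continuous) ?_
  rw [hs.closure_interior_eq_closure_of_nonempty_interior hsint]
  exact subset_closure ha

theorem StrongDual.apply_mk_eq_add_mul {E : Type*} [AddCommGroup E] [Module ℝ E]
    [TopologicalSpace E] (φ : StrongDual ℝ (E × ℝ)) (x : E) (t : ℝ) :
    φ (x, t) = φ (x, 0) + t * φ (0, 1) := by
  rw [← smul_eq_mul, ← map_smul, ← map_add]
  simp

section Epigraph

variable {E : Type*}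

theorem convex_setOf_le_affineMap [AddCommGroup E] [Module ℝ E] {f : E → EReal}
    (hf : ∀ x y : E, ∀ a b : ℝ, 0 ≤ a → 0 ≤ b → a + b = 1 →
      f (a • x + b • y) ≤ (a : EReal) * f x + (b : EReal) * f y)
    (h : E × ℝ →ᵃ[ℝ] ℝ) : Convex ℝ {p : E × ℝ | f p.1 ≤ h p} := by
  intro p hp q hq a b ha hb hab
  simp only [Set.mem_ofPred_eq, Prod.fst_add, Prod.smul_fst, Convex.combo_affine_apply hab,
    smul_eq_mul] at hp hq ⊢
  calc f (a • p.1 + b • q.1) ≤ (a : EReal) * f p.1 + (b : EReal) * f q.1 := hf _ _ a b ha hb hab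
    _ ≤ (a : EReal) * h p + (b : EReal) * h q := by gcongr
    _ = ((a * h p + b * h q : ℝ) : EReal) := by norm_cast

variable [TopologicalSpace E] {f : E → EReal}

theorem mk_mem_interior_setOf_le {x : E} {r : ℝ} (hf : ContinuousAt f x) (hr : f x < r) :
    (x, r) ∈ interior {p : E × ℝ | f p.1 ≤ p.2} := by
  have hcont : ContinuousAt (fun p : E × ℝ => f p.1) (x, r) := hf.comp continuousAt_fst
  refine mem_interior_iff_mem_nhds.2 (mem_of_superset ?_ fun p (hp : f p.1 < p.2) => hp.le)
  exact hcont.eventually_lt (continuous_coe_real_ereal.comp continuous_snd).continuousAt hr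

theorem lt_of_mem_interior_setOf_le {p : E × ℝ} (hp : p ∈ interior {p : E × ℝ | f p.1 ≤ p.2}) :
    f p.1 < p.2 := by
  have hnhds : ∀ᶠ t in 𝓝 p.2, (p.1, t) ∈ interior {p : E × ℝ | f p.1 ≤ p.2} :=
    (continuous_const.prodMk continuous_id).continuousAt.preimage_mem_nhds
      (isOpen_interior.mem_nhds hp)
  obtain ⟨t, ht, htp⟩ := ((hnhds.filter_mono nhdsWithin_le_nhds).and
    (self_mem_nhdsWithin (s := Set.Iio p.2))).exists
  exact (interior_subset (s := {p : E × ℝ | f p.1 ≤ p.2}) ht).trans_lt (EReal.coe_lt_coe_iff.2 htp)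

end Epigraph

section Duality

variable {E : Type*} [NormedAddCommGroup E] [NormedSpace ℝ E]

theorem le_eConj (f : E → EReal) (y : E →L[ℝ] ℝ) (x : E) : ((y x : ℝ) : EReal) - f x ≤ eConj f y :=
  le_iSup (fun x => ((y x : ℝ) : EReal) - f x) x

theorem eConj_le_of_forall_le {f : E → EReal} {y : E →L[ℝ] ℝ} {β : ℝ}
    (h : ∀ x (t : ℝ), f x ≤ t → y x - t ≤ β) : eConj f y ≤ β := by
  refine iSup_le fun x => ?_
  have hx := h x
  generalize f x = v at hx ⊢
  induction v with
  | bot => linarith [hx (y x - β - 1) bot_le]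
  | coe r => exact_mod_cast hx r le_rfl
  | top => simp

theorem neg_eConj_neg_sub_eConj_le {f g : E → EReal} {x : E} (hf : f x ≠ ⊥) (hg : g x ≠ ⊥)
    (y : E →L[ℝ] ℝ) : -eConj f (-y) - eConj g y ≤ f x + g x :=
  calc -eConj f (-y) - eConj g y ≤ -(((-y) x : ℝ) - f x) - ((y x : ℝ) - g x) :=
        EReal.sub_le_sub (EReal.neg_le_neg_iff.2 (le_eConj f (-y) x)) (le_eConj g y x)
    _ = f x + g x := by
      generalize f x = a at hf ⊢
      generalize g x = b at hg ⊢
      induction a <;> induction b <;> simp_all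
      · norm_cast; ring
      all_goals norm_cast

theorem exists_le_neg_eConj_neg_sub_eConj {f g : E → EReal}
    (hfconv : ∀ x y : E, ∀ a b : ℝ, 0 ≤ a → 0 ≤ b → a + b = 1 →
      f (a • x + b • y) ≤ (a : EReal) * f x + (b : EReal) * f y)
    (hgconv : ∀ x y : E, ∀ a b : ℝ, 0 ≤ a → 0 ≤ b → a + b = 1 →
      g (a • x + b • y) ≤ (a : EReal) * g x + (b : EReal) * g y)
    (hgbot : ∀ x, g x ≠ ⊥) {x₀ : E} (hfx₀ : f x₀ < ⊤) (hgx₀ : g x₀ < ⊤)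
    (hcont : ContinuousAt f x₀) {m : ℝ} (hm : ∀ x, (m : EReal) ≤ f x + g x) :
    ∃ y : E →L[ℝ] ℝ, (m : EReal) ≤ -eConj f (-y) - eConj g y := by
  set S := {p : E × ℝ | f p.1 ≤ p.2}
  set B := {p : E × ℝ |
    g p.1 ≤ (AffineMap.const ℝ (E × ℝ) m - (LinearMap.snd ℝ E ℝ).toAffineMap) p}
  have hB : ∀ x (t : ℝ), (x, t) ∈ B ↔ g x ≤ ((m - t : ℝ) : EReal) := fun _ _ => Iff.rfl
  obtain ⟨r, hfr, -⟩ := EReal.lt_iff_exists_real_btwn.1 hfx₀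
  obtain ⟨b, hb⟩ : ∃ b : ℝ, g x₀ = b := ⟨_, (EReal.coe_toReal hgx₀.ne (hgbot x₀)).symm⟩
  have hrS : (x₀, r) ∈ interior S := mk_mem_interior_setOf_le hcont hfr
  have hbB : (x₀, m - b) ∈ B := by rw [hB, hb, sub_sub_cancel]
  have hbr : m - b < r := by
    have hm₀ : (m : EReal) ≤ f x₀ + b := hb ▸ hm x₀
    have hmr : (m : EReal) < r + b := hm₀.trans_lt (EReal.add_lt_add_right_coe hfr b)
    norm_cast at hmr
    linarith
  have hdisj : Disjoint (interior S) B := by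
    refine Set.disjoint_left.2 fun ⟨x, t⟩ hxS hxB => (hm x).not_gt ?_
    have := EReal.add_lt_add_of_lt_of_le (lt_of_mem_interior_setOf_le hxS) ((hB x t).1 hxB)
      (hgbot x) (EReal.coe_ne_top _)
    rwa [← EReal.coe_add, add_sub_cancel] at this
  obtain ⟨φ, u, hφint, hφS, hφB⟩ := exists_separating_of_disjoint_interior
    (convex_setOf_le_affineMap hfconv (LinearMap.snd ℝ E ℝ).toAffineMap)
    (convex_setOf_le_affineMap hgconv _) hdisj ⟨_, hrS⟩
  set c := φ (0, 1)
  set L := φ.comp (ContinuousLinearMap.inl ℝ E ℝ)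
  have hL : ∀ x t, φ (x, t) = L x + t * c := φ.apply_mk_eq_add_mul
  have hc : c < 0 := by
    have hr := hφint _ hrS
    have hb := hφB _ hbB
    rw [hL] at hr hb
    nlinarith
  -- `-c⁻¹ • φ` is the functional `(x, t) ↦ -(y x) - t` for this `y`
  refine ⟨c⁻¹ • L, ?_⟩
  have hf_le : eConj f (-(c⁻¹ • L)) ≤ ((-(u / c) : ℝ) : EReal) := by
    refine eConj_le_of_forall_le fun x t hxt => ?_
    have hc' := mul_le_mul_of_nonpos_right (hφS (x, t) hxt) (inv_nonpos.2 hc.le)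
    rw [hL, add_mul, mul_inv_cancel_right₀ hc.ne] at hc'
    simp only [neg_apply, smul_apply, smul_eq_mul, div_eq_mul_inv]
    linarith
  have hg_le : eConj g (c⁻¹ • L) ≤ ((u / c - m : ℝ) : EReal) := by
    refine eConj_le_of_forall_le fun x t hxt => ?_
    have hxB : (x, m - t) ∈ B := by rwa [hB, sub_sub_cancel]
    have hc' := mul_le_mul_of_nonpos_right (hφB _ hxB) (inv_nonpos.2 hc.le)
    rw [hL, add_mul, mul_inv_cancel_right₀ hc.ne] at hc'
    simp only [smul_apply, smul_eq_mul, div_eq_mul_inv]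
    linarith
  calc (m : EReal) = -((-(u / c) : ℝ) : EReal) - ((u / c - m : ℝ) : EReal) := by
        norm_cast; ring
    _ ≤ _ := EReal.sub_le_sub (EReal.neg_le_neg_iff.2 hf_le) hg_le

end Duality

/-- Fenchel–Rockafellar duality: for convex `f, g : E → ℝ ∪ {+∞}` on a normed
space, finite at a common point `x₀` where `f` is continuous,
`inf_x (f + g) = max_y (-f*(-y) - g*(y))`, the maximum being attained. -/
theorem stmt11 (E : Type*) [NormedAddCommGroup E] [NormedSpace ℝ E]
    (f g : E → EReal)
    (hfbot : ∀ x, f x ≠ ⊥) (hgbot : ∀ x, g x ≠ ⊥)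
    (hfconv : ∀ x y : E, ∀ a b : ℝ, 0 ≤ a → 0 ≤ b → a + b = 1 →
      f (a • x + b • y) ≤ (a : EReal) * f x + (b : EReal) * f y)
    (hgconv : ∀ x y : E, ∀ a b : ℝ, 0 ≤ a → 0 ≤ b → a + b = 1 →
      g (a • x + b • y) ≤ (a : EReal) * g x + (b : EReal) * g y)
    (x₀ : E) (hfx₀ : f x₀ < ⊤) (hgx₀ : g x₀ < ⊤)
    (hcont : ContinuousAt f x₀) :
    (⨅ x : E, f x + g x) = (⨆ y : E →L[ℝ] ℝ, (-(eConj f (-y)) - eConj g y)) ∧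
      ∃ y : E →L[ℝ] ℝ, -(eConj f (-y)) - eConj g y = ⨅ x : E, f x + g x := by
  have hweak : ∀ y, -eConj f (-y) - eConj g y ≤ ⨅ x, f x + g x := fun y =>
    le_iInf fun x => neg_eConj_neg_sub_eConj_le (hfbot x) (hgbot x) y
  obtain ⟨y, hy⟩ : ∃ y, (⨅ x, f x + g x) ≤ -eConj f (-y) - eConj g y := by
    have hle : ∀ x, (⨅ x, f x + g x) ≤ f x + g x := iInf_le _
    have hlt : (⨅ x, f x + g x) < ⊤ := (hle x₀).trans_lt (EReal.add_lt_top hfx₀.ne hgx₀.ne)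
    generalize (⨅ x, f x + g x) = m at hle hlt
    induction m with
    | bot => exact ⟨0, bot_le⟩
    | coe m => exact exists_le_neg_eConj_neg_sub_eConj hfconv hgconv hgbot hfx₀ hgx₀ hcont hle
    | top => exact absurd hlt (lt_irrefl ⊤)
  exact ⟨le_antisymm (hy.trans (le_iSup (fun y => -eConj f (-y) - eConj g y) y)) (iSup_le hweak),
    y, le_antisymm (hweak y) hy⟩
end

section
/- Let $(\vartheta^\epsilon)_{\epsilon>0}$ be functions on $[0,T]$ of the form $\vartheta^\epsilon = \vartheta^\epsilon_\infty + \epsilon\vartheta^\epsilon_1$ with $\|\vartheta^\epsilon_\infty\|_{L^\infty} \leq C'$ and $\|\vartheta^\epsilon_1\|_{L^1} \leq C'$ uniformly in $\epsilon$, and let $\varpi^\epsilon \in W^{1,1}([0,T])$ with $\dot\varpi^\epsilon = \vartheta^\epsilon$ and $\varpi^\epsilon \to \varpi$ uniformly on $[0,T]$. Then $\varpi \in W^{1,\infty}([0,T])$; equivalently, $\varpi$ is Lipschitz continuous with constant at most $C'$. -/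
open MeasureTheory intervalIntegral Filter

/-!
Writing `ϖ^ε(x) - ϖ^ε(y) = ∫_y^x ϑ^ε_∞ + ε ∫_y^x ϑ^ε_1`, the first integral is bounded by
`C' |x - y|` and the second by the `L¹` norm `C'`, so `|ϖ^ε(x) - ϖ^ε(y)| ≤ C' |x - y| + ε C'`.
Letting `ε → 0⁺` pointwise in this inequality gives `|ϖ(x) - ϖ(y)| ≤ C' |x - y|`.
-/

open Set
open scoped Interval

theorem LipschitzOnWith.of_tendsto_of_dist_le {α β ι : Type*} [PseudoMetricSpace α]
    [PseudoMetricSpace β] {l : Filter ι} [l.NeBot] {F : ι → α → β} {f : α → β} {s : Set α}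
    {K : NNReal} {g : ι → ℝ} (hF : ∀ x ∈ s, Tendsto (fun i ↦ F i x) l (nhds (f x)))
    (hg : Tendsto g l (nhds 0))
    (hdist : ∀ᶠ i in l, ∀ x ∈ s, ∀ y ∈ s, dist (F i x) (F i y) ≤ K * dist x y + g i) :
    LipschitzOnWith K f s := by
  refine lipschitzOnWith_iff_dist_le_mul.mpr fun x hx y hy ↦ ?_
  have hlim : Tendsto (fun i ↦ K * dist x y + g i) l (nhds (K * dist x y)) := by
    simpa using tendsto_const_nhds.add hg
  exact le_of_tendsto_of_tendsto ((hF x hx).dist (hF y hy)) hlim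
    (hdist.mono fun i hi ↦ hi x hx y hy)

theorem sub_eq_intervalIntegral_of_eq_add_integral {F f : ℝ → ℝ} {a b x y : ℝ}
    (hf : IntervalIntegrable f volume a b) (hF : ∀ t ∈ Icc a b, F t = F a + ∫ s in a..t, f s)
    (hx : x ∈ Icc a b) (hy : y ∈ Icc a b) :
    F x - F y = ∫ s in y..x, f s := by
  have hfx := hf.mono_set (uIcc_subset_uIcc_left (Icc_subset_uIcc hx))
  have hfy := hf.mono_set (uIcc_subset_uIcc_left (Icc_subset_uIcc hy))
  rw [hF x hx, hF y hy, ← integral_interval_sub_left hfx hfy]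
  ring

theorem abs_intervalIntegral_le_integral_abs_of_mem_Icc {f : ℝ → ℝ} {a b x y : ℝ}
    (hf : IntervalIntegrable f volume a b) (hx : x ∈ Icc a b) (hy : y ∈ Icc a b) :
    |∫ s in y..x, f s| ≤ ∫ s in a..b, |f s| := by
  have hab : a ≤ b := hx.1.trans hx.2
  have hsub : Ι y x ⊆ Ioc a b := Ioc_subset_Ioc (le_min hy.1 hx.1) (max_le hy.2 hx.2)
  calc |∫ s in y..x, f s| ≤ ∫ s in Ι y x, |f s| := by
        simpa only [Real.norm_eq_abs] using norm_integral_le_integral_norm_uIoc (f := f) (μ := volume)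
    _ ≤ ∫ s in Ioc a b, |f s| :=
        setIntegral_mono_set ((intervalIntegrable_iff_integrableOn_Ioc_of_le hab).mp hf).norm
          (Eventually.of_forall fun _ ↦ abs_nonneg _) hsub.eventuallyLE
    _ = ∫ s in a..b, |f s| := (integral_of_le hab).symm

theorem dist_le_of_eq_add_integral_add_mul {F g h : ℝ → ℝ} {a b C M ε x y : ℝ} (hε : 0 ≤ ε)
    (hg_int : IntervalIntegrable g volume a b) (hh_int : IntervalIntegrable h volume a b)
    (hg : ∀ t ∈ Icc a b, |g t| ≤ C) (hh : ∫ t in a..b, |h t| ≤ M)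
    (hF : ∀ t ∈ Icc a b, F t = F a + ∫ s in a..t, (g s + ε * h s))
    (hx : x ∈ Icc a b) (hy : y ∈ Icc a b) :
    dist (F x) (F y) ≤ C * dist x y + ε * M := by
  have hsub : Ι y x ⊆ Icc a b := uIoc_subset_uIcc.trans (uIcc_subset_Icc hy hx)
  have hg_bound : |∫ s in y..x, g s| ≤ C * dist x y := by
    rw [Real.dist_eq]
    simpa only [Real.norm_eq_abs] using
      norm_integral_le_of_norm_le_const fun t ht ↦ (Real.norm_eq_abs _).trans_le (hg t (hsub ht))
  have hh_bound : |∫ s in y..x, h s| ≤ M :=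
    (abs_intervalIntegral_le_integral_abs_of_mem_Icc hh_int hx hy).trans hh
  have hgyx := hg_int.mono_set (uIcc_subset_uIcc (Icc_subset_uIcc hy) (Icc_subset_uIcc hx))
  have hhyx := hh_int.mono_set (uIcc_subset_uIcc (Icc_subset_uIcc hy) (Icc_subset_uIcc hx))
  rw [Real.dist_eq, sub_eq_intervalIntegral_of_eq_add_integral (hg_int.add (hh_int.const_mul ε))
    hF hx hy, integral_add hgyx (hhyx.const_mul ε), intervalIntegral.integral_const_mul]
  calc |(∫ s in y..x, g s) + ε * ∫ s in y..x, h s|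
      ≤ |∫ s in y..x, g s| + ε * |∫ s in y..x, h s| := by
        rw [← abs_of_nonneg hε, ← abs_mul, abs_of_nonneg hε]
        exact abs_add_le _ _
    _ ≤ C * dist x y + ε * M := by gcongr

theorem stmt17_general (T C' : ℝ)
    (ϑinf ϑ1 : ℝ → ℝ → ℝ) (ϖe : ℝ → ℝ → ℝ) (ϖ : ℝ → ℝ)
    (hboundInf : ∀ ε ∈ Set.Ioo (0:ℝ) 1, ∀ t ∈ Set.Icc (0:ℝ) T, |ϑinf ε t| ≤ C')
    (hint1 : ∀ ε ∈ Set.Ioo (0:ℝ) 1, IntervalIntegrable (ϑ1 ε) volume 0 T)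
    (hintInf : ∀ ε ∈ Set.Ioo (0:ℝ) 1, IntervalIntegrable (ϑinf ε) volume 0 T)
    (hbound1 : ∀ ε ∈ Set.Ioo (0:ℝ) 1, (∫ t in (0:ℝ)..T, |ϑ1 ε t|) ≤ C')
    (hW11 : ∀ ε ∈ Set.Ioo (0:ℝ) 1, ∀ t ∈ Set.Icc (0:ℝ) T,
      ϖe ε t = ϖe ε 0 + ∫ s in (0:ℝ)..t, (ϑinf ε s + ε * ϑ1 ε s))
    (hconv : TendstoUniformlyOn ϖe ϖ (nhdsWithin 0 (Set.Ioi 0)) (Set.Icc 0 T)) :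
    LipschitzOnWith (Real.toNNReal C') ϖ (Set.Icc 0 T) := by
  have hsmall : ∀ᶠ ε in nhdsWithin 0 (Ioi 0), ε ∈ Ioo (0:ℝ) 1 :=
    Ioo_mem_nhdsGT zero_lt_one
  have hg : Tendsto (fun ε : ℝ ↦ ε * C') (nhdsWithin 0 (Ioi 0)) (nhds 0) :=
    ((continuous_mul_const C').tendsto' 0 0 (zero_mul C')).mono_left nhdsWithin_le_nhds
  refine LipschitzOnWith.of_tendsto_of_dist_le (fun x hx ↦ hconv.tendsto_at hx) hg ?_
  filter_upwards [hsmall] with ε hε x hx y hy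
  calc dist (ϖe ε x) (ϖe ε y) ≤ C' * dist x y + ε * C' :=
        dist_le_of_eq_add_integral_add_mul hε.1.le (hintInf ε hε) (hint1 ε hε)
          (hboundInf ε hε) (hbound1 ε hε) (hW11 ε hε) hx hy
    _ ≤ C'.toNNReal * dist x y + ε * C' := by gcongr; exact Real.le_coe_toNNReal C'

/-- Abstract compactness lemma for the Lipschitz regularity of the price:
if `ϖ̇^ε = ϑ^ε_∞ + ε ϑ^ε_1` with `‖ϑ^ε_∞‖_{L^∞} ≤ C'` and `‖ϑ^ε_1‖_{L¹} ≤ C'`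
uniformly in `ε`, and `ϖ^ε → ϖ` uniformly on `[0,T]` as `ε → 0⁺`, then `ϖ` is
Lipschitz on `[0,T]` with constant at most `C'`. -/
theorem stmt17 (T C' : ℝ) (hT : 0 < T) (hC' : 0 ≤ C')
    (ϑinf ϑ1 : ℝ → ℝ → ℝ) (ϖe : ℝ → ℝ → ℝ) (ϖ : ℝ → ℝ)
    (hboundInf : ∀ ε ∈ Set.Ioo (0:ℝ) 1, ∀ t ∈ Set.Icc (0:ℝ) T, |ϑinf ε t| ≤ C')
    (hint1 : ∀ ε ∈ Set.Ioo (0:ℝ) 1, IntervalIntegrable (ϑ1 ε) volume 0 T)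
    (hintInf : ∀ ε ∈ Set.Ioo (0:ℝ) 1, IntervalIntegrable (ϑinf ε) volume 0 T)
    (hbound1 : ∀ ε ∈ Set.Ioo (0:ℝ) 1, (∫ t in (0:ℝ)..T, |ϑ1 ε t|) ≤ C')
    (hW11 : ∀ ε ∈ Set.Ioo (0:ℝ) 1, ∀ t ∈ Set.Icc (0:ℝ) T,
      ϖe ε t = ϖe ε 0 + ∫ s in (0:ℝ)..t, (ϑinf ε s + ε * ϑ1 ε s))
    (hconv : TendstoUniformlyOn ϖe ϖ (nhdsWithin 0 (Set.Ioi 0)) (Set.Icc 0 T)) :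
    LipschitzOnWith (Real.toNNReal C') ϖ (Set.Icc 0 T) :=
  stmt17_general T C' ϑinf ϑ1 ϖe ϖ hboundInf hint1 hintInf hbound1 hW11 hconv
end
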